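/- Let (X, f_{1,∞}) be a nonautonomous discrete dynamical system such that the sequence (f_n)_{n∈ℕ} converges uniformly to a function φ : X → X, and let p be a free ultrafilter on ℕ. Then the map Ψ_p : E(X, φ) → X^X defined by Ψ_p(g) = g ∘ f_1^p (equivalently, Ψ_p(φ^q) = f_1^{p+q} for q ∈ β(ℕ)) is well-defined, continuous, and maps E(X, φ) onto E_p(X, f_{1,∞}) := {f_1^{p+q} : q ∈ β(ℕ)}; in particular E_p(X, f_{1,∞}) is a continuous image of E(X, φ). -/

import Mathlib

/-!
Since `f_n → φ` uniformly and `p` is free, applying `f_{m+n+1}` to `f_1^{m+n}(x)` and letting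
`m → p` gives `p-lim_m f_1^{m+n}(x) = φ^n (f_1^p x)`, by induction on `n`. Taking then the
`q`-limit in `n` is exactly the `(p + q)`-limit of `f_1^k(x)`, so `φ^q ∘ f_1^p = f_1^{p+q}`.
Together with the description of `E(X, φ)` as the set of `q`-limits of `φ^n` in the compact
space `X^X`, this identifies the image of `E(X, φ)` under the continuous map `g ↦ g ∘ f_1^p`.
-/

open Filter Topology

/-- The `n`-th iterate `f_1^n = f_n ∘ ⋯ ∘ f_1` (maps indexed from `1`; `f 0` unused). -/
def iterSeq {X : Type*} (f : ℕ → X → X) : ℕ → X → X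
  | 0 => id
  | n + 1 => f (n + 1) ∘ iterSeq f n

/-- The `p`-limit of a sequence `u` with respect to an ultrafilter `p` on `ℕ`. -/
noncomputable def pLim {X : Type*} [TopologicalSpace X] (p : Ultrafilter ℕ) (u : ℕ → X) : X :=
  letI : Nonempty X := ⟨u 0⟩
  limUnder (p : Filter ℕ) u

/-- `f_1^p(x) = p-lim_n f_1^n(x)`. -/
noncomputable def pIter {X : Type*} [TopologicalSpace X] (f : ℕ → X → X)
    (p : Ultrafilter ℕ) : X → X :=
  fun x => pLim p fun n => iterSeq f n x

/-- `φ^q(x) = q-lim_n φ^n(x)` for a single map `φ : X → X`. -/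
noncomputable def pIterMap {X : Type*} [TopologicalSpace X] (φ : X → X)
    (q : Ultrafilter ℕ) : X → X :=
  fun x => pLim q fun n => φ^[n] x

/-- The sum of two ultrafilters on `ℕ`: `A ∈ p + q` iff `{n : {m : m + n ∈ A} ∈ p} ∈ q`. -/
def uAdd (p q : Ultrafilter ℕ) : Ultrafilter ℕ :=
  q.bind fun n => p.map fun m => m + n

section pLim

variable {Y : Type*} [TopologicalSpace Y] [T2Space Y]

lemma pLim_eq_of_tendsto {p : Ultrafilter ℕ} {u : ℕ → Y} {a : Y}
    (h : Tendsto u p (𝓝 a)) : pLim p u = a :=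
  h.limUnder_eq

variable [CompactSpace Y]

lemma tendsto_pLim (p : Ultrafilter ℕ) (u : ℕ → Y) : Tendsto u p (𝓝 (pLim p u)) := by
  obtain ⟨a, -, ha⟩ := isCompact_univ.ultrafilter_le_nhds (p.map u) (by simp)
  rwa [pLim_eq_of_tendsto ha]

lemma closure_range_eq_range_pLim (u : ℕ → Y) :
    closure (Set.range u) = Set.range fun q : Ultrafilter ℕ => pLim q u := by
  ext a
  constructor
  · intro ha
    have : (comap u (𝓝 a)).NeBot := by
      refine comap_neBot fun t ht => ?_
      obtain ⟨_, hbt, n, rfl⟩ := mem_closure_iff_nhds.mp ha t ht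
      exact ⟨n, hbt⟩
    exact ⟨Ultrafilter.of (comap u (𝓝 a)),
      pLim_eq_of_tendsto (tendsto_comap.mono_left (Ultrafilter.of_le _))⟩
  · rintro ⟨q, rfl⟩
    exact mem_closure_of_tendsto (tendsto_pLim q u) (Eventually.of_forall Set.mem_range_self)

end pLim

lemma tendsto_uAdd {Y : Type*} [TopologicalSpace Y] {p q : Ultrafilter ℕ} {u : ℕ → Y}
    {v : ℕ → Y} {a : Y} (hu : ∀ n, Tendsto (fun m => u (m + n)) p (𝓝 (v n)))
    (hv : Tendsto v q (𝓝 a)) : Tendsto u (uAdd p q) (𝓝 a) := by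
  refine (nhds_basis_opens a).tendsto_right_iff.mpr fun t ⟨hat, ht⟩ => ?_
  show {k | u k ∈ t} ∈ (q : Filter ℕ).bind fun n => map (· + n) (p : Filter ℕ)
  rw [mem_bind']
  filter_upwards [hv (ht.mem_nhds hat)] with n hn using hu n (ht.mem_nhds hn)

lemma pIterMap_eq_pLim {X : Type*} [TopologicalSpace X] [CompactSpace X] [T2Space X]
    (φ : X → X) (q : Ultrafilter ℕ) : pIterMap φ q = pLim q fun n => φ^[n] := by
  funext x
  exact pLim_eq_of_tendsto (tendsto_pi_nhds.mp (tendsto_pLim q _) x)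

lemma TendstoUniformly.comp_tendsto {ι ι' α β : Type*} [UniformSpace β] {F : ι → α → β}
    {φ : α → β} {l : Filter ι} (h : TendstoUniformly F φ l) {l' : Filter ι'} {g : ι' → ι}
    (hg : Tendsto g l' l) : TendstoUniformly (fun m => F (g m)) φ l' :=
  fun s hs => hg.eventually (h s hs)

section iterSeq

variable {X : Type*} [UniformSpace X] [CompactSpace X] [T2Space X] {f : ℕ → X → X} {φ : X → X}

lemma tendsto_iterSeq_add (hφ : Continuous φ) (hconv : TendstoUniformly f φ atTop)
    {p : Ultrafilter ℕ} (hp : (p : Filter ℕ) ≤ cofinite) (x : X) (n : ℕ) :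
    Tendsto (fun m => iterSeq f (m + n) x) p (𝓝 (φ^[n] (pIter f p x))) := by
  induction n with
  | zero => exact tendsto_pLim p _
  | succ n ih =>
    have hidx : Tendsto (fun m => m + n + 1) (p : Filter ℕ) atTop :=
      tendsto_atTop_mono (fun m => by omega) (Nat.cofinite_eq_atTop ▸ hp)
    rw [Function.iterate_succ_apply']
    exact (hconv.comp_tendsto hidx).tendsto_comp hφ.continuousAt ih

lemma pIterMap_comp_pIter (hφ : Continuous φ) (hconv : TendstoUniformly f φ atTop)
    {p : Ultrafilter ℕ} (hp : (p : Filter ℕ) ≤ cofinite) (q : Ultrafilter ℕ) :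
    pIterMap φ q ∘ pIter f p = pIter f (uAdd p q) := by
  funext x
  exact (pLim_eq_of_tendsto
    (tendsto_uAdd (tendsto_iterSeq_add hφ hconv hp x) (tendsto_pLim q _))).symm

end iterSeq

/-- If `(f_n)` converges uniformly to `φ : X → X` and `p` is a free ultrafilter on `ℕ`, then
the map `Ψ_p : E(X, φ) → X^X`, `Ψ_p(g) = g ∘ f_1^p` (equivalently `Ψ_p(φ^q) = f_1^{p+q}`)
is well-defined, continuous, and maps `E(X, φ)` onto
`E_p(X, f_{1,∞}) = {f_1^{p+q} : q ∈ β(ℕ)}`; in particular `E_p(X, f_{1,∞})` is a continuous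
image of `E(X, φ)`. -/
theorem stmt16 {X : Type*} [MetricSpace X] [CompactSpace X]
    (f : ℕ → X → X) (hf : ∀ n, 1 ≤ n → Continuous (f n))
    (φ : X → X) (hconv : TendstoUniformly (fun n x => f n x) φ Filter.atTop)
    (p : Ultrafilter ℕ) (hp : (p : Filter ℕ) ≤ Filter.cofinite) :
    Continuous (fun g : X → X => g ∘ pIter f p) ∧
    (∀ q : Ultrafilter ℕ, pIterMap φ q ∘ pIter f p = pIter f (uAdd p q)) ∧
    (fun g : X → X => g ∘ pIter f p) '' closure {h : X → X | ∃ n : ℕ, h = φ^[n]}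
      = {h : X → X | ∃ q : Ultrafilter ℕ, h = pIter f (uAdd p q)} := by
  have hφ : Continuous φ := hconv.continuous (eventually_atTop.2 ⟨1, hf⟩).frequently
  have hcomp := pIterMap_comp_pIter hφ hconv hp
  refine ⟨Pi.continuous_precomp _, hcomp, ?_⟩
  have hE : {h : X → X | ∃ n : ℕ, h = φ^[n]} = Set.range fun n => φ^[n] := by
    ext; simp [eq_comm]
  rw [hE, closure_range_eq_range_pLim, ← Set.range_comp]
  ext h
  simp [← pIterMap_eq_pLim, hcomp, eq_comm]
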